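/- arXiv:0808.3438 — 2 statements merged into one kernel-verified Lean document; each statement's English description precedes it below -/
import Mathlib

section
/- Define F on W = {(T,Y) : 0 ≤ T ≤ T_c, 0 ≤ Y ≤ 2Δ₀², (T,Y) ≠ (0,0)} by F(T,Y) = ∫_{2k_B T_c ε}^{ℏω_D} h(T,Y,ξ) dξ − 1/(U₀N₀), where h(T,Y,ξ) = (1/√(ξ²+Y)) tanh(√(ξ²+Y)/(2k_B T)) for T > 0 and h(0,Y,ξ) = 1/√(ξ²+Y) for Y > 0. Then F is continuous on W. -/
/-!
On the range of integration `ξ` stays away from `0`, so the integrand is bounded by `1/|ξ|`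
uniformly in `(T, Y)`, and by dominated convergence it suffices that it be continuous in `(T, Y)`
for each fixed `ξ`. Writing `tanh (s / (2 k_B T)) = tanhRecip (2 k_B T / s)` with `s = √(ξ² + Y) > 0`,
the case split at `T = 0` is absorbed into `tanhRecip`, which is continuous on `[0, ∞)` because
`tanh → 1` at `+∞`.
-/

open Real Set Filter Topology MeasureTheory intervalIntegral Interval

namespace Real

@[fun_prop]
theorem continuous_tanh : Continuous tanh :=
  (continuous_sinh.div continuous_cosh fun x => (cosh_pos x).ne').congr fun x =>
    (tanh_eq_sinh_div_cosh x).symm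

theorem tanh_eq_one_sub_two_div (x : ℝ) : tanh x = 1 - 2 / (exp (2 * x) + 1) := by
  have h : exp (2 * x) = exp x * exp x := by rw [← exp_add, two_mul]
  rw [tanh_eq_sinh_div_cosh, sinh_eq, cosh_eq, exp_neg, h]
  field_simp
  ring

theorem tendsto_tanh_atTop : Tendsto tanh atTop (𝓝 1) := by
  have h : Tendsto (fun x => exp (2 * x) + 1) atTop atTop :=
    tendsto_atTop_add_const_right _ _
      (tendsto_exp_atTop.comp (tendsto_id.const_mul_atTop two_pos))
  simpa [← tanh_eq_one_sub_two_div] using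
    (h.const_div_atTop 2).const_sub (1 : ℝ)

theorem sqrt_sq_add_pos {x y : ℝ} (hx : x ≠ 0) (hy : 0 ≤ y) : 0 < √(x ^ 2 + y) :=
  (abs_pos.2 hx).trans_le (abs_le_sqrt (le_add_of_nonneg_right hy))

end Real

/-- `u ↦ tanh (1 / u)`, extended by its right limit at `u = 0`. -/
noncomputable def tanhRecip (u : ℝ) : ℝ := if u = 0 then 1 else tanh u⁻¹

theorem continuousOn_tanhRecip : ContinuousOn tanhRecip (Ici 0) := by
  rw [← Ioi_insert]
  intro u hu
  rcases hu with rfl | hu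
  · rw [continuousWithinAt_insert_self, ContinuousWithinAt, tanhRecip, if_pos rfl]
    refine (tendsto_tanh_atTop.comp tendsto_inv_nhdsGT_zero).congr' ?_
    filter_upwards [self_mem_nhdsWithin] with v hv
    exact (if_neg (ne_of_gt hv)).symm
  · refine ContinuousAt.continuousWithinAt <|
      (continuous_tanh.continuousAt.comp (continuousAt_inv₀ hu.ne')).congr ?_
    filter_upwards [lt_mem_nhds hu] with v hv
    exact (if_neg hv.ne').symm

/-- The BCS gap-equation integrand `h(T, Y, ξ)` at `p = (T, Y)`, with `c = 2 k_B`. -/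
noncomputable def gapIntegrand (c : ℝ) (p : ℝ × ℝ) (ξ : ℝ) : ℝ :=
  if p.1 = 0 then 1 / √(ξ ^ 2 + p.2)
  else (1 / √(ξ ^ 2 + p.2)) * tanh (√(ξ ^ 2 + p.2) / (c * p.1))

namespace gapIntegrand

variable {c ξ : ℝ} {p : ℝ × ℝ}

theorem eq_mul_tanhRecip (hc : c ≠ 0) (hp : 0 < √(ξ ^ 2 + p.2)) :
    gapIntegrand c p ξ = (√(ξ ^ 2 + p.2))⁻¹ * tanhRecip (c * p.1 / √(ξ ^ 2 + p.2)) := by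
  unfold gapIntegrand tanhRecip
  by_cases hT : p.1 = 0
  · simp [hT]
  · have : c * p.1 / √(ξ ^ 2 + p.2) ≠ 0 := by positivity
    rw [if_neg hT, if_neg this, inv_div, one_div]

theorem abs_le_inv_abs (hξ : ξ ≠ 0) (hY : 0 ≤ p.2) : |gapIntegrand c p ξ| ≤ |ξ|⁻¹ := by
  have hpos := sqrt_sq_add_pos hξ hY
  have hinv : (√(ξ ^ 2 + p.2))⁻¹ ≤ |ξ|⁻¹ :=
    inv_anti₀ (abs_pos.2 hξ) (abs_le_sqrt (le_add_of_nonneg_right hY))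
  unfold gapIntegrand
  split_ifs
  · rwa [one_div, abs_of_pos (inv_pos.2 hpos)]
  · rw [abs_mul, one_div, abs_of_pos (inv_pos.2 hpos)]
    exact (mul_le_of_le_one_right (inv_pos.2 hpos).le (abs_tanh_lt_one _).le).trans hinv

theorem measurable (c : ℝ) (p : ℝ × ℝ) : Measurable (gapIntegrand c p) := by
  unfold gapIntegrand
  split_ifs <;> fun_prop

theorem continuousOn (hc : 0 < c) (hξ : ξ ≠ 0) :
    ContinuousOn (fun p => gapIntegrand c p ξ) (Ici 0 ×ˢ Ici 0) := by
  have hsqrt : Continuous fun p : ℝ × ℝ => √(ξ ^ 2 + p.2) := by fun_prop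
  refine ContinuousOn.congr ?_ fun p hp => eq_mul_tanhRecip hc.ne' (sqrt_sq_add_pos hξ hp.2)
  refine (hsqrt.continuousOn.inv₀ fun p hp => (sqrt_sq_add_pos hξ hp.2).ne').mul ?_
  refine continuousOn_tanhRecip.comp (ContinuousOn.div (by fun_prop) hsqrt.continuousOn
    fun p hp => (sqrt_sq_add_pos hξ hp.2).ne') fun p hp => ?_
  exact div_nonneg (mul_nonneg hc.le hp.1) (Real.sqrt_nonneg _)

end gapIntegrand

theorem continuousOn_intervalIntegral_gapIntegrand {c a b : ℝ} (hc : 0 < c)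
    (h0 : (0 : ℝ) ∉ [[a, b]]) :
    ContinuousOn (fun p => ∫ ξ in a..b, gapIntegrand c p ξ) (Ici 0 ×ˢ Ici 0) := by
  have hne : ∀ ξ ∈ [[a, b]], ξ ≠ 0 := fun ξ hξ h => h0 (h ▸ hξ)
  intro p hp
  refine continuousWithinAt_of_dominated_interval (bound := fun ξ => |ξ|⁻¹)
    (Eventually.of_forall fun q => (gapIntegrand.measurable c q).aestronglyMeasurable) ?_
    (intervalIntegrable_inv (fun ξ hξ => abs_ne_zero.2 (hne ξ hξ)) continuous_abs.continuousOn)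
    (ae_of_all _ fun ξ hξ =>
      gapIntegrand.continuousOn hc (hne ξ (uIoc_subset_uIcc hξ)) p hp)
  filter_upwards [self_mem_nhdsWithin] with q hq
  exact ae_of_all _ fun ξ hξ => gapIntegrand.abs_le_inv_abs (hne ξ (uIoc_subset_uIcc hξ)) hq.2

theorem F_continuousOn_W_general
    (kB hbar ωD U0 N0 ε Tc : ℝ)
    (hkB : 0 < kB) (hε : 0 < ε) (hTc : 0 < Tc)
    (hcut : 2*kB*Tc*ε < hbar*ωD) :
    ContinuousOn
      (fun p : ℝ × ℝ =>
        (∫ ξ in (2*kB*Tc*ε)..(hbar*ωD),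
          if p.1 = 0 then 1/Real.sqrt (ξ^2+p.2)
          else (1/Real.sqrt (ξ^2+p.2)) * Real.tanh (Real.sqrt (ξ^2+p.2)/(2*kB*p.1)))
        - 1/(U0*N0))
      {p : ℝ × ℝ | 0 ≤ p.1 ∧ p.1 ≤ Tc ∧ 0 ≤ p.2 ∧
        p.2 ≤ 2*(hbar*ωD/Real.sinh (1/(U0*N0)))^2 ∧ p ≠ (0, 0)} := by
  have h0 : (0 : ℝ) ∉ [[2*kB*Tc*ε, hbar*ωD]] := by
    rw [uIcc_of_le hcut.le]
    exact notMem_Icc_of_lt (by positivity)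
  exact ((continuousOn_intervalIntegral_gapIntegrand (by positivity) h0).mono
    fun p hp => ⟨hp.1, hp.2.2.1⟩).sub continuousOn_const

/-- The function `F(T,Y) = ∫_{2k_BT_cε}^{ℏω_D} h(T,Y,ξ) dξ − 1/(U₀N₀)`, where
`h(T,Y,ξ) = (1/√(ξ²+Y)) tanh(√(ξ²+Y)/(2k_BT))` for `T > 0` and
`h(0,Y,ξ) = 1/√(ξ²+Y)`, is continuous on
`W = {(T,Y) : 0 ≤ T ≤ T_c, 0 ≤ Y ≤ 2Δ₀², (T,Y) ≠ (0,0)}`. -/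
theorem F_continuousOn_W
    (kB hbar ωD U0 N0 ε Tc : ℝ)
    (hkB : 0 < kB) (hhbar : 0 < hbar) (hωD : 0 < ωD)
    (hU0 : 0 < U0) (hN0 : 0 < N0) (hε : 0 < ε) (hTc : 0 < Tc)
    (hcut : 2*kB*Tc*ε < hbar*ωD) :
    ContinuousOn
      (fun p : ℝ × ℝ =>
        (∫ ξ in (2*kB*Tc*ε)..(hbar*ωD),
          if p.1 = 0 then 1/Real.sqrt (ξ^2+p.2)
          else (1/Real.sqrt (ξ^2+p.2)) * Real.tanh (Real.sqrt (ξ^2+p.2)/(2*kB*p.1)))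
        - 1/(U0*N0))
      {p : ℝ × ℝ | 0 ≤ p.1 ∧ p.1 ≤ Tc ∧ 0 ≤ p.2 ∧
        p.2 ≤ 2*(hbar*ωD/Real.sinh (1/(U0*N0)))^2 ∧ p ≠ (0, 0)} :=
  F_continuousOn_W_general kB hbar ωD U0 N0 ε Tc hkB hε hTc hcut
end

section
/- Let f be the solution of the gap equation with f(T_c) = 0 and f'(T_c) < 0 given by f'(T_c) = 8k_B²T_c [∫_{ε}^{M} dη/cosh²η]/[∫_{ε}^{M} g(η)dη], M = ℏω_D/(2k_B T_c). Define δ(T) = f(T)/U₀ − 2N₀∫_{2k_B T_c ε}^{ℏω_D} (√(ξ²+f(T)) − ξ)dξ − 4N₀k_B T ∫_{2k_B T_c ε}^{ℏω_D} ln[(1+e^{−√(ξ²+f(T))/(k_B T)})/(1+e^{−ξ/(k_B T)})] dξ. Then δ(T_c) = 0, δ'(T_c) = 0, and δ''(T_c) = (2N₀ f'(T_c)/T_c)·(1/(1+e^{2ε}) − 1/(1+e^{ℏω_D/(k_B T_c)})) < 0. -/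
open Real intervalIntegral

noncomputable def gBCS : ℝ → ℝ := fun η =>
  if η = 0 then -2/3 else (1/η^2) * (1/(Real.cosh η)^2 - Real.tanh η / η)

/-!
Write `δ(T) = f(T)/U₀ - 2N₀ ∫ ω(T, f(T), ξ) dξ`, where `ω(T, Δ, ξ)` is the free-energy difference
of the mode `ξ` between gap parameter `Δ` and the normal state. Differentiating under the integral,
the `f'(T)`-term of `δ'(T)` is `f'(T) (1/U₀ - N₀ ∫ tanh(E/2k_BT)/E dξ)`, which the gap equation
kills; hence `δ'(T) = -4N₀k_B ∫ (s(E/k_BT) - s(ξ/k_BT)) dξ` on `T ≤ T_c`, with `s` the entropy of a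
fermion mode and `E = √(ξ² + f(T))`. Both `δ` and `δ'` vanish at `T_c`, where `E = ξ`.
Differentiating `δ'` once more at `T_c`, only the `f'(T_c)`-term survives, and since
`s'(u) = u n'(u)` for the Fermi function `n`, it integrates to
`(2N₀f'(T_c)/T_c)(n(2ε) - n(ℏω_D/k_BT_c))`. Its sign is that of `f'(T_c)`, negative because
`g < 0` on `(0, ∞)`. To use two-sided differentiation under the integral at `T_c`, `f` is
continued linearly beyond `T_c`.
-/

open Set Filter Topology Metric
open scoped Interval

@[fun_prop]
lemma Real.continuous_tanh_s19 : Continuous tanh := by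
  have : tanh = fun x => sinh x / cosh x := funext tanh_eq_sinh_div_cosh
  rw [this]
  exact continuous_sinh.div continuous_cosh fun x => (cosh_pos x).ne'

theorem hasDerivAt_intervalIntegral_of_continuousOn {F F' : ℝ → ℝ → ℝ} {U : Set ℝ}
    {a b x₀ : ℝ} (hU : IsOpen U) (hx₀ : x₀ ∈ U) (hF : ∀ x ∈ U, ContinuousOn (F x) [[a, b]])
    (hF' : ContinuousOn (Function.uncurry F') (U ×ˢ [[a, b]]))
    (hderiv : ∀ x ∈ U, ∀ ξ ∈ [[a, b]], HasDerivAt (F · ξ) (F' x ξ) x) :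
    HasDerivAt (fun x => ∫ ξ in a..b, F x ξ) (∫ ξ in a..b, F' x₀ ξ) x₀ := by
  obtain ⟨r, hr, hrU⟩ := nhds_basis_closedBall.mem_iff.mp (hU.mem_nhds hx₀)
  obtain ⟨C, hC⟩ := ((isCompact_closedBall x₀ r).prod isCompact_uIcc).exists_bound_of_continuousOn
    (hF'.mono (prod_mono hrU subset_rfl))
  have hF'x₀ : ContinuousOn (F' x₀) [[a, b]] :=
    hF'.comp (Continuous.continuousOn (Continuous.prodMk_right x₀)) fun ξ hξ => ⟨hx₀, hξ⟩
  refine (hasDerivAt_integral_of_dominated_loc_of_deriv_le (bound := fun _ => C)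
    (ball_mem_nhds x₀ hr) ?_ (hF x₀ hx₀).intervalIntegrable
    ((hF'x₀.mono uIoc_subset_uIcc).aestronglyMeasurable measurableSet_uIoc) ?_
    intervalIntegrable_const ?_).2
  · filter_upwards [hU.mem_nhds hx₀] with x hx
    exact ((hF x hx).mono uIoc_subset_uIcc).aestronglyMeasurable measurableSet_uIoc
  · exact MeasureTheory.ae_of_all _ fun ξ hξ x hx =>
      hC (x, ξ) ⟨ball_subset_closedBall hx, uIoc_subset_uIcc hξ⟩
  · exact MeasureTheory.ae_of_all _ fun ξ hξ x hx =>
      hderiv x (hrU (ball_subset_closedBall hx)) ξ (uIoc_subset_uIcc hξ)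

theorem exists_hasDerivAt_extension {f f' : ℝ → ℝ} {l c : ℝ}
    (hf : ∀ t ∈ Ioo l c, HasDerivAt f (f' t) t) (hfc : HasDerivWithinAt f (f' c) (Iic c) c)
    (hf' : ContinuousOn f' (Ioc l c)) :
    ∃ g g' : ℝ → ℝ, EqOn f g (Iic c) ∧ g' c = f' c ∧
      ∀ t ∈ Ioi l, HasDerivAt g (g' t) t ∧ ContinuousAt g' t := by
  set g : ℝ → ℝ := fun t => if t ≤ c then f t else f c + f' c * (t - c)
  set g' : ℝ → ℝ := fun t => if t ≤ c then f' t else f' c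
  have hg : EqOn g f (Iic c) := fun t (ht : t ≤ c) => if_pos ht
  have hg' : EqOn g' f' (Iic c) := fun t (ht : t ≤ c) => if_pos ht
  have hlin : ∀ t, HasDerivAt (fun t => f c + f' c * (t - c)) (f' c) t := fun t => by
    simpa using ((hasDerivAt_id t).sub_const c).const_mul (f' c) |>.const_add (f c)
  have hg_right : EqOn g (fun t => f c + f' c * (t - c)) (Ici c) := fun t (ht : c ≤ t) => by
    rcases ht.eq_or_lt with rfl | ht
    · simp [g]
    · exact if_neg (not_le.mpr ht)
  have hg'_right : EqOn g' (fun _ => f' c) (Ici c) := fun t (ht : c ≤ t) => by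
    rcases ht.eq_or_lt with rfl | ht
    · simp [g']
    · exact if_neg (not_le.mpr ht)
  refine ⟨g, g', hg.symm, hg' self_mem_Iic, fun t (ht : l < t) => ?_⟩
  rcases lt_trichotomy t c with htc | rfl | htc
  · have hlt : g =ᶠ[𝓝 t] f :=
      eventually_of_mem (Iio_mem_nhds htc) fun s (hs : s < c) => hg (mem_Iic.2 hs.le)
    have hlt' : g' =ᶠ[𝓝 t] f' :=
      eventually_of_mem (Iio_mem_nhds htc) fun s (hs : s < c) => hg' (mem_Iic.2 hs.le)
    rw [hg' htc.le]
    exact ⟨(hf t ⟨ht, htc⟩).congr_of_eventuallyEq hlt,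
      ((hf' t ⟨ht, htc.le⟩).continuousAt (Ioc_mem_nhds ht htc)).congr hlt'.symm⟩
  · refine ⟨?_, continuousAt_iff_continuous_left_right.mpr ⟨?_, ?_⟩⟩
    · have := (hfc.congr hg (hg self_mem_Iic)).union
        ((hlin t).hasDerivWithinAt.congr hg_right (hg_right self_mem_Ici))
      rwa [Iic_union_Ici, hasDerivWithinAt_univ, ← hg' self_mem_Iic] at this
    · exact ((hf' t ⟨ht, le_rfl⟩).mono_of_mem_nhdsWithin (Ioc_mem_nhdsLE ht)).congr hg'
        (hg' self_mem_Iic)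
    · exact continuousWithinAt_const.congr hg'_right (hg'_right self_mem_Ici)
  · have hgt : g =ᶠ[𝓝 t] fun t => f c + f' c * (t - c) :=
      eventually_of_mem (Ioi_mem_nhds htc) fun s (hs : c < s) => hg_right (mem_Ici.2 hs.le)
    have hg't : g' =ᶠ[𝓝 t] fun _ => f' c :=
      eventually_of_mem (Ioi_mem_nhds htc) fun s (hs : c < s) => hg'_right (mem_Ici.2 hs.le)
    rw [hg't.eq_of_nhds]
    exact ⟨(hlin t).congr_of_eventuallyEq hgt, continuousAt_const.congr hg't.symm⟩

lemma derivWithin_derivWithin_eq {g g' : ℝ → ℝ} {s : Set ℝ} {x g'' : ℝ} (hs : UniqueDiffOn ℝ s)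
    (hx : x ∈ s) (hg : ∀ᶠ t in 𝓝[s] x, HasDerivWithinAt g (g' t) s t)
    (hg' : HasDerivWithinAt g' g'' s x) :
    derivWithin (derivWithin g s) s x = g'' := by
  have h : derivWithin g s =ᶠ[𝓝[s] x] g' := by
    filter_upwards [hg, self_mem_nhdsWithin] with t ht hts using ht.derivWithin (hs t hts)
  exact (hg'.congr_of_eventuallyEq h (h.self_of_nhdsWithin hx)).derivWithin (hs x hx)

lemma isOpen_setOf_pos_and_lt {F : ℝ → ℝ} (hF : ∀ T > 0, ContinuousAt F T) (c : ℝ) :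
    IsOpen {T | 0 < T ∧ c < F T} :=
  isOpen_iff_mem_nhds.2 fun T hT =>
    inter_mem (Ioi_mem_nhds hT.1) ((hF T hT.1).preimage_mem_nhds (Ioi_mem_nhds hT.2))

noncomputable def fermi (u : ℝ) : ℝ := 1 / (1 + exp u)

/-- The entropy `-n log n - (1 - n) log (1 - n)` of a fermion mode with occupation
`n = fermi u`. -/
noncomputable def fermiEntropy (u : ℝ) : ℝ := log (1 + exp (-u)) + u * fermi u

@[fun_prop]
lemma continuous_fermi : Continuous fermi :=
  continuous_const.div (by fun_prop) fun u => by positivity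

@[fun_prop]
lemma continuous_fermiEntropy : Continuous fermiEntropy := by
  unfold fermiEntropy
  fun_prop (disch := intro; positivity)

noncomputable def fermiEntropyDeriv (u : ℝ) : ℝ := u * (fermi u * (fermi u - 1))

@[fun_prop]
lemma continuous_fermiEntropyDeriv : Continuous fermiEntropyDeriv := by
  unfold fermiEntropyDeriv
  fun_prop

lemma fermi_strictAnti : StrictAnti fermi := fun u v huv => by
  unfold fermi
  gcongr

lemma tanh_half_eq_one_sub_two_mul_fermi (u : ℝ) : tanh (u / 2) = 1 - 2 * fermi u := by
  have h : exp u = exp (u / 2) ^ 2 := by rw [← exp_nat_mul]; ring_nf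
  rw [tanh_eq, fermi, h, exp_neg]
  field_simp
  ring

lemma hasDerivAt_fermi (u : ℝ) : HasDerivAt fermi (fermi u * (fermi u - 1)) u := by
  refine ((hasDerivAt_const u (1 : ℝ)).div ((hasDerivAt_exp u).const_add 1)
    (by positivity)).congr_deriv ?_
  simp only [fermi]
  field_simp
  ring

lemma hasDerivAt_log_one_add_exp_neg (u : ℝ) :
    HasDerivAt (fun u => log (1 + exp (-u))) (-fermi u) u := by
  refine (((hasDerivAt_neg u).exp.const_add 1).log (by positivity)).congr_deriv ?_
  rw [fermi, exp_neg]
  field_simp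
  ring

lemma hasDerivAt_fermiEntropy (u : ℝ) : HasDerivAt fermiEntropy (fermiEntropyDeriv u) u :=
  ((hasDerivAt_log_one_add_exp_neg u).add ((hasDerivAt_id u).mul (hasDerivAt_fermi u))).congr_deriv
    (by simp only [id, fermiEntropyDeriv]; ring)

lemma integral_fermi_mul_fermi_sub_one_comp_div {c : ℝ} (hc : c ≠ 0) (a b : ℝ) :
    ∫ ξ in a..b, fermi (ξ / c) * (fermi (ξ / c) - 1) = c * (fermi (b / c) - fermi (a / c)) := by
  rw [integral_comp_div (fun u => fermi u * (fermi u - 1)) hc, smul_eq_mul,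
    integral_eq_sub_of_hasDerivAt (fun u _ => hasDerivAt_fermi u)
      (Continuous.intervalIntegrable (by fun_prop) _ _)]

section ThermalScaling

variable {e : ℝ → ℝ} {e' c T : ℝ}

lemma HasDerivAt.div_mul_id (he : HasDerivAt e e' T) (hc : c ≠ 0) (hT : T ≠ 0) :
    HasDerivAt (fun T => e T / (c * T)) ((e' - e T / T) / (c * T)) T := by
  refine (he.div ((hasDerivAt_id T).const_mul c) (mul_ne_zero hc hT)).congr_deriv ?_
  simp only [id]
  field_simp

lemma HasDerivAt.mul_log_one_add_exp_neg_div (he : HasDerivAt e e' T) (hc : c ≠ 0) (hT : T ≠ 0) :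
    HasDerivAt (fun T => c * T * Real.log (1 + Real.exp (-(e T / (c * T)))))
      (c * fermiEntropy (e T / (c * T)) - fermi (e T / (c * T)) * e') T := by
  refine (((hasDerivAt_id T).const_mul c).mul
    ((hasDerivAt_log_one_add_exp_neg _).comp T (he.div_mul_id hc hT))).congr_deriv ?_
  simp only [id, Function.comp_apply, fermiEntropy]
  field_simp
  ring

lemma HasDerivAt.fermiEntropy_div (he : HasDerivAt e e' T) (hc : c ≠ 0) (hT : T ≠ 0) :
    HasDerivAt (fun T => fermiEntropy (e T / (c * T)))
      (fermiEntropyDeriv (e T / (c * T)) * ((e' - e T / T) / (c * T))) T :=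
  (hasDerivAt_fermiEntropy _).comp T (he.div_mul_id hc hT)

end ThermalScaling

noncomputable def freeEnergyDiff (kB T Δ ξ : ℝ) : ℝ :=
  √(ξ ^ 2 + Δ) - ξ + 2 * (kB * T * log (1 + exp (-(√(ξ ^ 2 + Δ) / (kB * T))))
    - kB * T * log (1 + exp (-(ξ / (kB * T)))))

noncomputable def entropyDiff (kB T Δ ξ : ℝ) : ℝ :=
  fermiEntropy (√(ξ ^ 2 + Δ) / (kB * T)) - fermiEntropy (ξ / (kB * T))

noncomputable def entropyDiffDeriv (kB T Δ Δ' ξ : ℝ) : ℝ :=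
  fermiEntropyDeriv (√(ξ ^ 2 + Δ) / (kB * T))
      * ((Δ' / (2 * √(ξ ^ 2 + Δ)) - √(ξ ^ 2 + Δ) / T) / (kB * T))
    + fermiEntropyDeriv (ξ / (kB * T)) * (ξ / T / (kB * T))

section ModeContributions

variable {kB T Δ ξ : ℝ}

lemma freeEnergyDiff_zero (hξ : 0 ≤ ξ) : freeEnergyDiff kB T 0 ξ = 0 := by
  simp [freeEnergyDiff, sqrt_sq hξ]

lemma entropyDiff_zero (hξ : 0 ≤ ξ) : entropyDiff kB T 0 ξ = 0 := by
  simp [entropyDiff, sqrt_sq hξ]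

lemma entropyDiffDeriv_zero (hkB : kB ≠ 0) (hT : T ≠ 0) (hξ : 0 < ξ) (Δ' : ℝ) :
    entropyDiffDeriv kB T 0 Δ' ξ
      = Δ' / (2 * (kB * T) ^ 2) * (fermi (ξ / (kB * T)) * (fermi (ξ / (kB * T)) - 1)) := by
  simp only [entropyDiffDeriv, fermiEntropyDeriv, add_zero, sqrt_sq hξ.le]
  field_simp
  ring

variable {F : ℝ → ℝ} {F' : ℝ}

lemma hasDerivAt_freeEnergyDiff (hF : HasDerivAt F F' T) (hkB : kB ≠ 0) (hT : T ≠ 0)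
    (hE : 0 < ξ ^ 2 + F T) :
    HasDerivAt (fun T => freeEnergyDiff kB T (F T) ξ)
      (F' / (2 * √(ξ ^ 2 + F T)) * (1 - 2 * fermi (√(ξ ^ 2 + F T) / (kB * T)))
        + 2 * kB * entropyDiff kB T (F T) ξ) T := by
  have hE' := (hF.const_add (ξ ^ 2)).sqrt hE.ne'
  refine (((hE'.sub_const ξ).add (((hE'.mul_log_one_add_exp_neg_div hkB hT).sub
    ((hasDerivAt_const T ξ).mul_log_one_add_exp_neg_div hkB hT)).const_mul 2))).congr_deriv ?_
  simp only [entropyDiff]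
  ring

lemma hasDerivAt_entropyDiff (hF : HasDerivAt F F' T) (hkB : kB ≠ 0) (hT : T ≠ 0)
    (hE : 0 < ξ ^ 2 + F T) :
    HasDerivAt (fun T => entropyDiff kB T (F T) ξ) (entropyDiffDeriv kB T (F T) F' ξ) T :=
  ((((hF.const_add (ξ ^ 2)).sqrt hE.ne').fermiEntropy_div hkB hT).sub
    ((hasDerivAt_const T ξ).fermiEntropy_div hkB hT)).congr_deriv (by rw [entropyDiffDeriv]; ring)

end ModeContributions

section GapIntegrals

variable {kB a b T₀ : ℝ} {F F' : ℝ → ℝ}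

lemma sq_add_pos_of_mem_uIcc (ha : 0 < a) (hab : a ≤ b) {Δ ξ : ℝ} (hΔ : -a ^ 2 < Δ)
    (hξ : ξ ∈ [[a, b]]) : 0 < ξ ^ 2 + Δ := by
  rw [uIcc_of_le hab] at hξ
  nlinarith [hξ.1]

theorem hasDerivAt_integral_freeEnergyDiff (hkB : 0 < kB) (ha : 0 < a) (hab : a ≤ b)
    (hF : ∀ T > 0, HasDerivAt F (F' T) T ∧ ContinuousAt F' T) (hT₀ : 0 < T₀)
    (hFT₀ : -a ^ 2 < F T₀) :
    HasDerivAt (fun T => ∫ ξ in a..b, freeEnergyDiff kB T (F T) ξ)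
      (F' T₀ / 2 * (∫ ξ in a..b, 1 / √(ξ ^ 2 + F T₀) * tanh (√(ξ ^ 2 + F T₀) / (2 * kB * T₀)))
        + 2 * kB * ∫ ξ in a..b, entropyDiff kB T₀ (F T₀) ξ) T₀ := by
  have hU := isOpen_setOf_pos_and_lt (fun T hT => (hF T hT).1.continuousAt) (-a ^ 2)
  have hE : ∀ T ∈ {T | 0 < T ∧ -a ^ 2 < F T}, ∀ ξ ∈ [[a, b]], 0 < ξ ^ 2 + F T :=
    fun T hT ξ hξ => sq_add_pos_of_mem_uIcc ha hab hT.2 hξ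
  have hderiv := hasDerivAt_intervalIntegral_of_continuousOn hU ⟨hT₀, hFT₀⟩
    (fun T _ => Continuous.continuousOn <| by
      unfold freeEnergyDiff
      fun_prop (disch := intro; positivity))
    (fun p hp => ContinuousAt.continuousWithinAt ?_)
    (fun T hT ξ hξ => hasDerivAt_freeEnergyDiff (hF T hT.1).1 hkB.ne' hT.1.ne' (hE T hT ξ hξ))
  · have hgap : ContinuousOn
        (fun ξ => 1 / √(ξ ^ 2 + F T₀) * tanh (√(ξ ^ 2 + F T₀) / (2 * kB * T₀))) [[a, b]] :=
      fun ξ hξ => ContinuousAt.continuousWithinAt <| by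
        have := (sqrt_pos.2 (hE T₀ ⟨hT₀, hFT₀⟩ ξ hξ)).ne'
        fun_prop (disch := assumption)
    have hent : Continuous fun ξ => entropyDiff kB T₀ (F T₀) ξ := by
      unfold entropyDiff
      fun_prop
    refine hderiv.congr_deriv ?_
    rw [← integral_const_mul, ← integral_const_mul, ← integral_add
      (hgap.intervalIntegrable.const_mul _) ((hent.intervalIntegrable _ _).const_mul _)]
    refine integral_congr fun ξ _ => ?_
    rw [show √(ξ ^ 2 + F T₀) / (2 * kB * T₀) = √(ξ ^ 2 + F T₀) / (kB * T₀) / 2 by ring,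
      tanh_half_eq_one_sub_two_mul_fermi]
    ring
  · obtain ⟨⟨hT, hFT⟩, hξ⟩ := hp
    have := (hF p.1 hT).1.continuousAt
    have := (hF p.1 hT).2
    have := (sqrt_pos.2 (hE p.1 ⟨hT, hFT⟩ p.2 hξ)).ne'
    have := hkB.ne'
    have := hT.ne'
    simp only [entropyDiff]
    fun_prop (disch := first | assumption | positivity | simp [*])

theorem hasDerivAt_integral_entropyDiff (hkB : 0 < kB) (ha : 0 < a) (hab : a ≤ b)
    (hF : ∀ T > 0, HasDerivAt F (F' T) T ∧ ContinuousAt F' T) (hT₀ : 0 < T₀) (hFT₀ : F T₀ = 0) :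
    HasDerivAt (fun T => ∫ ξ in a..b, entropyDiff kB T (F T) ξ)
      (F' T₀ / (2 * (kB * T₀)) * (fermi (b / (kB * T₀)) - fermi (a / (kB * T₀)))) T₀ := by
  have hU := isOpen_setOf_pos_and_lt (fun T hT => (hF T hT).1.continuousAt) (-a ^ 2)
  have hE : ∀ T ∈ {T | 0 < T ∧ -a ^ 2 < F T}, ∀ ξ ∈ [[a, b]], 0 < ξ ^ 2 + F T :=
    fun T hT ξ hξ => sq_add_pos_of_mem_uIcc ha hab hT.2 hξ
  have hderiv := hasDerivAt_intervalIntegral_of_continuousOn hU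
    ⟨hT₀, hFT₀ ▸ neg_neg_of_pos (pow_pos ha 2)⟩
    (fun T _ => Continuous.continuousOn (by unfold entropyDiff; fun_prop))
    (fun p hp => ContinuousAt.continuousWithinAt ?_)
    (fun T hT ξ hξ => hasDerivAt_entropyDiff (hF T hT.1).1 hkB.ne' hT.1.ne' (hE T hT ξ hξ))
  · refine hderiv.congr_deriv ?_
    have hkT : kB * T₀ ≠ 0 := by positivity
    rw [integral_congr fun ξ hξ => by
        rw [hFT₀, entropyDiffDeriv_zero hkB.ne' hT₀.ne' (ha.trans_le (uIcc_of_le hab ▸ hξ).1)],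
      intervalIntegral.integral_const_mul, integral_fermi_mul_fermi_sub_one_comp_div hkT]
    field_simp
  · obtain ⟨⟨hT, hFT⟩, hξ⟩ := hp
    have := (hF p.1 hT).1.continuousAt
    have := (hF p.1 hT).2
    have := (sqrt_pos.2 (hE p.1 ⟨hT, hFT⟩ p.2 hξ)).ne'
    have := hkB.ne'
    have := hT.ne'
    simp only [entropyDiffDeriv]
    fun_prop (disch := first | assumption | positivity | simp [*])

end GapIntegrals

lemma integral_sqrt_sub_add_integral_log_eq (kB N0 a b T Δ : ℝ) :
    2 * N0 * (∫ ξ in a..b, (√(ξ ^ 2 + Δ) - ξ))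
        + 4 * N0 * kB * T * (∫ ξ in a..b,
          log ((1 + exp (-√(ξ ^ 2 + Δ) / (kB * T))) / (1 + exp (-ξ / (kB * T)))))
      = 2 * N0 * ∫ ξ in a..b, freeEnergyDiff kB T Δ ξ := by
  rw [← intervalIntegral.integral_const_mul, ← intervalIntegral.integral_const_mul,
    ← intervalIntegral.integral_const_mul, ← integral_add]
  · refine integral_congr fun ξ _ => ?_
    rw [log_div (by positivity) (by positivity), neg_div, neg_div, freeEnergyDiff]
    ring
  all_goals exact Continuous.intervalIntegrable (by fun_prop (disch := intro; positivity)) _ _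

noncomputable def condensationEnergy (kB U0 N0 a b : ℝ) (f : ℝ → ℝ) (T : ℝ) : ℝ :=
  f T / U0 - 2 * N0 * ∫ ξ in a..b, freeEnergyDiff kB T (f T) ξ

section Condensation

variable {kB U0 N0 a b Tc : ℝ} {f F F' : ℝ → ℝ}

lemma condensationEnergy_eq_zero (ha : 0 < a) (hab : a ≤ b) (hfTc : f Tc = 0) :
    condensationEnergy kB U0 N0 a b f Tc = 0 := by
  rw [condensationEnergy, hfTc, integral_congr fun ξ hξ =>
    freeEnergyDiff_zero (ha.le.trans (uIcc_of_le hab ▸ hξ).1)]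
  simp

lemma integral_entropyDiff_eq_zero (ha : 0 < a) (hab : a ≤ b) (T : ℝ) :
    ∫ ξ in a..b, entropyDiff kB T 0 ξ = 0 := by
  rw [integral_congr fun ξ hξ => entropyDiff_zero (ha.le.trans (uIcc_of_le hab ▸ hξ).1)]
  simp

theorem eventually_hasDerivWithinAt_condensationEnergy (hkB : 0 < kB) (hN0 : N0 ≠ 0)
    (ha : 0 < a) (hab : a ≤ b) (hF : ∀ T > 0, HasDerivAt F (F' T) T ∧ ContinuousAt F' T)
    (hfF : EqOn f F (Iic Tc)) (hTc : 0 < Tc) (hfTc : f Tc = 0)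
    (hgap : ∀ T ∈ Ioc 0 Tc, ∫ ξ in a..b,
      1 / √(ξ ^ 2 + f T) * tanh (√(ξ ^ 2 + f T) / (2 * kB * T)) = 1 / (U0 * N0)) :
    ∀ᶠ T in 𝓝[≤] Tc, HasDerivWithinAt (condensationEnergy kB U0 N0 a b f)
      (-4 * N0 * kB * ∫ ξ in a..b, entropyDiff kB T (f T) ξ) (Iic Tc) T := by
  have hU : {T | 0 < T ∧ -a ^ 2 < F T} ∈ 𝓝 Tc :=
    (isOpen_setOf_pos_and_lt (fun T hT => (hF T hT).1.continuousAt) _).mem_nhds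
      ⟨hTc, hfF self_mem_Iic ▸ hfTc ▸ neg_neg_of_pos (pow_pos ha 2)⟩
  filter_upwards [self_mem_nhdsWithin, mem_nhdsWithin_of_mem_nhds hU] with T (hT : T ≤ Tc) hTU
  have hd := ((hF T hTU.1).1.div_const U0).sub
    ((hasDerivAt_integral_freeEnergyDiff hkB ha hab hF hTU.1 hTU.2).const_mul (2 * N0))
  refine (hd.hasDerivWithinAt.congr (fun t ht => by rw [condensationEnergy, hfF ht]; rfl)
    (by rw [condensationEnergy, hfF hT]; rfl)).congr_deriv ?_
  rw [← hfF hT, hgap T ⟨hTU.1, hT⟩]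
  field_simp
  ring

theorem hasDerivWithinAt_integral_entropyDiff (hkB : 0 < kB) (ha : 0 < a) (hab : a ≤ b)
    (hF : ∀ T > 0, HasDerivAt F (F' T) T ∧ ContinuousAt F' T)
    (hfF : EqOn f F (Iic Tc)) (hTc : 0 < Tc) (hfTc : f Tc = 0) :
    HasDerivWithinAt (fun T => ∫ ξ in a..b, entropyDiff kB T (f T) ξ)
      (F' Tc / (2 * (kB * Tc)) * (fermi (b / (kB * Tc)) - fermi (a / (kB * Tc)))) (Iic Tc) Tc :=
  (hasDerivAt_integral_entropyDiff hkB ha hab hF hTc (hfF self_mem_Iic ▸ hfTc)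
    ).hasDerivWithinAt.congr (fun T hT => by rw [hfF hT]) (by rw [hfF self_mem_Iic])

end Condensation

lemma gBCS_eq {η : ℝ} (hη : η ≠ 0) :
    gBCS η = 1 / η ^ 2 * (1 / cosh η ^ 2 - tanh η / η) := if_neg hη

lemma gBCS_neg {η : ℝ} (hη : 0 < η) : gBCS η < 0 := by
  have hc := cosh_pos η
  have hsc : η < sinh η * cosh η := by
    have := self_lt_sinh_iff.mpr (by linarith : 0 < 2 * η)
    rw [sinh_two_mul] at this
    linarith
  rw [gBCS_eq hη.ne']
  refine mul_neg_of_pos_of_neg (by positivity) (sub_neg.2 ?_)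
  rw [tanh_eq_sinh_div_cosh, div_div, div_lt_div_iff₀ (by positivity) (by positivity)]
  nlinarith

lemma integral_gBCS_neg {ε M : ℝ} (hε : 0 < ε) (hεM : ε < M) : ∫ η in ε..M, gBCS η < 0 := by
  have hcont : ContinuousOn gBCS [[ε, M]] := fun η hη => by
    have hη0 : η ≠ 0 := (hε.trans_le (uIcc_of_le hεM.le ▸ hη).1).ne'
    refine (ContinuousAt.congr ?_ (eventually_ne_nhds hη0 |>.mono fun x hx => (gBCS_eq hx).symm))
      |>.continuousWithinAt
    fun_prop (disch := first | assumption | positivity | exact pow_ne_zero 2 hη0)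
  have := intervalIntegral_pos_of_pos_on hcont.intervalIntegrable.neg
    (fun η hη => neg_pos.2 (gBCS_neg (hε.trans hη.1))) hεM
  rw [Pi.neg_def, intervalIntegral.integral_neg] at this
  linarith

theorem delta_second_derivative_at_Tc_general
    (kB hbar ωD U0 N0 ε Tc : ℝ) (f fd : ℝ → ℝ)
    (hkB : 0 < kB)
    (hN0 : 0 < N0) (hε : 0 < ε) (hTc : 0 < Tc)
    (hcut : 2*kB*Tc*ε < hbar*ωD)
    (hfTc : f Tc = 0)
    (hgap : ∀ T ∈ Set.Ioc (0:ℝ) Tc,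
      (∫ ξ in (2*kB*Tc*ε)..(hbar*ωD),
        (1/Real.sqrt (ξ^2 + f T)) * Real.tanh (Real.sqrt (ξ^2 + f T)/(2*kB*T)))
        = 1/(U0*N0))
    (hfd : ∀ T ∈ Set.Ioo (0:ℝ) Tc, HasDerivAt f (fd T) T)
    (hfdTc : HasDerivWithinAt f (fd Tc) (Set.Iic Tc) Tc)
    (hfd_cont : ContinuousOn fd (Set.Ioc 0 Tc))
    (hfdTc_val : fd Tc = 8*kB^2*Tc *
        (∫ η in ε..(hbar*ωD/(2*kB*Tc)), 1/(Real.cosh η)^2) /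
        (∫ η in ε..(hbar*ωD/(2*kB*Tc)), gBCS η)) :
    (fun T => f T / U0
        - 2*N0 * (∫ ξ in (2*kB*Tc*ε)..(hbar*ωD), (Real.sqrt (ξ^2 + f T) - ξ))
        - 4*N0*kB*T * (∫ ξ in (2*kB*Tc*ε)..(hbar*ωD),
            Real.log ((1 + Real.exp (-(Real.sqrt (ξ^2 + f T))/(kB*T))) /
              (1 + Real.exp (-ξ/(kB*T)))))) Tc = 0 ∧
    derivWithin (fun T => f T / U0
        - 2*N0 * (∫ ξ in (2*kB*Tc*ε)..(hbar*ωD), (Real.sqrt (ξ^2 + f T) - ξ))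
        - 4*N0*kB*T * (∫ ξ in (2*kB*Tc*ε)..(hbar*ωD),
            Real.log ((1 + Real.exp (-(Real.sqrt (ξ^2 + f T))/(kB*T))) /
              (1 + Real.exp (-ξ/(kB*T)))))) (Set.Iic Tc) Tc = 0 ∧
    derivWithin (derivWithin (fun T => f T / U0
        - 2*N0 * (∫ ξ in (2*kB*Tc*ε)..(hbar*ωD), (Real.sqrt (ξ^2 + f T) - ξ))
        - 4*N0*kB*T * (∫ ξ in (2*kB*Tc*ε)..(hbar*ωD),
            Real.log ((1 + Real.exp (-(Real.sqrt (ξ^2 + f T))/(kB*T))) /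
              (1 + Real.exp (-ξ/(kB*T)))))) (Set.Iic Tc)) (Set.Iic Tc) Tc
      = (2*N0*fd Tc/Tc) *
        (1/(1 + Real.exp (2*ε)) - 1/(1 + Real.exp (hbar*ωD/(kB*Tc)))) ∧
    (2*N0*fd Tc/Tc) *
        (1/(1 + Real.exp (2*ε)) - 1/(1 + Real.exp (hbar*ωD/(kB*Tc)))) < 0 := by
  obtain ⟨F, F', hfF, hF'Tc, hF⟩ := exists_hasDerivAt_extension hfd hfdTc hfd_cont
  have ha : 0 < 2 * kB * Tc * ε := by positivity
  have hδ' := eventually_hasDerivWithinAt_condensationEnergy hkB hN0.ne' ha hcut.le hF hfF hTc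
    hfTc hgap
  have hS := hasDerivWithinAt_integral_entropyDiff hkB ha hcut.le hF hfF hTc hfTc
  have hIic := uniqueDiffOn_Iic Tc
  have h2ε : 2 * kB * Tc * ε / (kB * Tc) = 2 * ε := by field_simp
  have hfd_neg : fd Tc < 0 := by
    have hεM : ε < hbar * ωD / (2 * kB * Tc) := by rw [lt_div_iff₀ (by positivity)]; linarith
    rw [hfdTc_val]
    have hcosh : Continuous fun η => 1 / cosh η ^ 2 := by fun_prop (disch := intro; positivity)
    exact div_neg_of_pos_of_neg (mul_pos (by positivity) (intervalIntegral_pos_of_pos_on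
      (hcosh.intervalIntegrable _ _) (fun η _ => by positivity) hεM)) (integral_gBCS_neg hε hεM)
  simp only [sub_sub, integral_sqrt_sub_add_integral_log_eq, ← condensationEnergy.eq_1]
  refine ⟨condensationEnergy_eq_zero ha hcut.le hfTc, ?_, ?_, ?_⟩
  · rw [(hδ'.self_of_nhdsWithin self_mem_Iic).derivWithin (hIic Tc self_mem_Iic), hfTc,
      integral_entropyDiff_eq_zero ha hcut.le, mul_zero]
  · rw [derivWithin_derivWithin_eq hIic self_mem_Iic hδ' (hS.const_mul _), hF'Tc, h2ε]
    simp only [fermi]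
    field_simp
    ring
  · refine mul_neg_of_neg_of_pos (div_neg_of_neg_of_pos (by nlinarith) hTc)
      (sub_pos.2 (fermi_strictAnti ?_))
    rw [lt_div_iff₀ (by positivity)]
    linarith

/-- For the condensation energy
`δ(T) = f(T)/U₀ − 2N₀∫(√(ξ²+f(T))−ξ)dξ
      − 4N₀k_BT∫ ln[(1+e^{−√(ξ²+f(T))/(k_BT)})/(1+e^{−ξ/(k_BT)})]dξ`
one has `δ(T_c) = 0`, `δ'(T_c) = 0` and
`δ''(T_c) = (2N₀f'(T_c)/T_c)(1/(1+e^{2ε}) − 1/(1+e^{ℏω_D/(k_BT_c)})) < 0`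
(one-sided derivatives from the left at `T_c`). -/
theorem delta_second_derivative_at_Tc
    (kB hbar ωD U0 N0 ε Tc : ℝ) (f fd : ℝ → ℝ)
    (hkB : 0 < kB) (hhbar : 0 < hbar) (hωD : 0 < ωD)
    (hU0 : 0 < U0) (hN0 : 0 < N0) (hε : 0 < ε) (hTc : 0 < Tc)
    (hcut : 2*kB*Tc*ε < hbar*ωD)
    (hTcdef : (∫ η in ε..(hbar*ωD/(2*kB*Tc)), Real.tanh η / η) = 1/(U0*N0))
    (hf_cont : ContinuousOn f (Set.Icc 0 Tc))
    (hf_nonneg : ∀ T ∈ Set.Icc (0:ℝ) Tc, 0 ≤ f T)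
    (hfTc : f Tc = 0)
    (hgap : ∀ T ∈ Set.Ioc (0:ℝ) Tc,
      (∫ ξ in (2*kB*Tc*ε)..(hbar*ωD),
        (1/Real.sqrt (ξ^2 + f T)) * Real.tanh (Real.sqrt (ξ^2 + f T)/(2*kB*T)))
        = 1/(U0*N0))
    (hfd : ∀ T ∈ Set.Ioo (0:ℝ) Tc, HasDerivAt f (fd T) T)
    (hfdTc : HasDerivWithinAt f (fd Tc) (Set.Iic Tc) Tc)
    (hfd_cont : ContinuousOn fd (Set.Ioc 0 Tc))
    (hfdTc_val : fd Tc = 8*kB^2*Tc *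
        (∫ η in ε..(hbar*ωD/(2*kB*Tc)), 1/(Real.cosh η)^2) /
        (∫ η in ε..(hbar*ωD/(2*kB*Tc)), gBCS η)) :
    (fun T => f T / U0
        - 2*N0 * (∫ ξ in (2*kB*Tc*ε)..(hbar*ωD), (Real.sqrt (ξ^2 + f T) - ξ))
        - 4*N0*kB*T * (∫ ξ in (2*kB*Tc*ε)..(hbar*ωD),
            Real.log ((1 + Real.exp (-(Real.sqrt (ξ^2 + f T))/(kB*T))) /
              (1 + Real.exp (-ξ/(kB*T)))))) Tc = 0 ∧
    derivWithin (fun T => f T / U0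
        - 2*N0 * (∫ ξ in (2*kB*Tc*ε)..(hbar*ωD), (Real.sqrt (ξ^2 + f T) - ξ))
        - 4*N0*kB*T * (∫ ξ in (2*kB*Tc*ε)..(hbar*ωD),
            Real.log ((1 + Real.exp (-(Real.sqrt (ξ^2 + f T))/(kB*T))) /
              (1 + Real.exp (-ξ/(kB*T)))))) (Set.Iic Tc) Tc = 0 ∧
    derivWithin (derivWithin (fun T => f T / U0
        - 2*N0 * (∫ ξ in (2*kB*Tc*ε)..(hbar*ωD), (Real.sqrt (ξ^2 + f T) - ξ))
        - 4*N0*kB*T * (∫ ξ in (2*kB*Tc*ε)..(hbar*ωD),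
            Real.log ((1 + Real.exp (-(Real.sqrt (ξ^2 + f T))/(kB*T))) /
              (1 + Real.exp (-ξ/(kB*T)))))) (Set.Iic Tc)) (Set.Iic Tc) Tc
      = (2*N0*fd Tc/Tc) *
        (1/(1 + Real.exp (2*ε)) - 1/(1 + Real.exp (hbar*ωD/(kB*Tc)))) ∧
    (2*N0*fd Tc/Tc) *
        (1/(1 + Real.exp (2*ε)) - 1/(1 + Real.exp (hbar*ωD/(kB*Tc)))) < 0 :=
  delta_second_derivative_at_Tc_general kB hbar ωD U0 N0 ε Tc f fd hkB hN0 hε hTc hcut hfTc hgap hfd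
    hfdTc hfd_cont hfdTc_val
end
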